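/- Let A ∈ ℝ^{m×n} and let Q ∈ ℝ^{n×k} have orthonormal columns; let S ∈ ℝ^{k×m} have orthonormal rows such that Q spans the row space of S A. Then S A Q is a k×k matrix with (S A Q)(S A Q)ᵀ = (S A)(S A)ᵀ, hence S A Q and S A have identical singular values, and by the Cauchy interlacing property σ_i(S A Q) ≤ σ_i(A Q) for all i; therefore ∑_{i=1}^r σ_i(S A)² ≤ ∑_{i=1}^r σ_i(A Q)² for every r ≤ k. -/

import Mathlib

open Matrix BigOperators Finset

/-- Squared Frobenius norm of a real matrix. -/
noncomputable def frobSq {m n : ℕ} (A : Matrix (Fin m) (Fin n) ℝ) : ℝ :=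
  ∑ i, ∑ j, (A i j) ^ 2

/-- Squares of the singular values of `A`, in decreasing order, indexed by `ℕ`
(equal to `0` beyond the number of columns): the eigenvalues of `Aᵀ * A` sorted
decreasingly. -/
noncomputable def sValSq {m n : ℕ} (A : Matrix (Fin m) (Fin n) ℝ) : ℕ → ℝ :=
  fun i =>
    if h : i < n then
      (show (Aᵀ * A).IsHermitian by
        simpa [Matrix.conjTranspose_eq_transpose_of_trivial] using
          Matrix.isHermitian_conjTranspose_mul_self A).eigenvalues
        ((Tuple.sort (fun j => -(show (Aᵀ * A).IsHermitian by
        simpa [Matrix.conjTranspose_eq_transpose_of_trivial] using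
          Matrix.isHermitian_conjTranspose_mul_self A).eigenvalues j)) ⟨i, h⟩)
    else 0

/-- The `i`-th largest singular value (0-indexed) of a real matrix. -/
noncomputable def sVal {m n : ℕ} (A : Matrix (Fin m) (Fin n) ℝ) : ℕ → ℝ :=
  fun i => Real.sqrt (sValSq A i)

lemma isHermitian_transpose_mul_self_aux {m n : ℕ} (A : Matrix (Fin m) (Fin n) ℝ) :
    (Aᵀ * A).IsHermitian := by
  simpa [Matrix.conjTranspose_eq_transpose_of_trivial] using
    Matrix.isHermitian_conjTranspose_mul_self A


variable {N : ℕ} {H : Matrix (Fin N) (Fin N) ℝ}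

noncomputable def coord (hH : H.IsHermitian) (x : EuclideanSpace ℝ (Fin N)) (j : Fin N) : ℝ :=
  (hH.eigenvectorBasis j : Fin N → ℝ) ⬝ᵥ (x : Fin N → ℝ)

lemma coord_eq_repr (hH : H.IsHermitian) (x : EuclideanSpace ℝ (Fin N)) (j : Fin N) :
    coord hH x j = hH.eigenvectorBasis.repr x j := by
  rw [OrthonormalBasis.repr_apply_apply]
  simp [coord, inner, dotProduct]
  exact Finset.sum_congr rfl fun _ _ => mul_comm _ _

lemma dot_coord (hH : H.IsHermitian) (x y : EuclideanSpace ℝ (Fin N)) :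
    (x : Fin N → ℝ) ⬝ᵥ (y : Fin N → ℝ) = ∑ j, coord hH x j * coord hH y j := by
  have h1 : (inner ℝ x y : ℝ) = inner ℝ (hH.eigenvectorBasis.repr x) (hH.eigenvectorBasis.repr y) :=
    (hH.eigenvectorBasis.repr.inner_map_map x y).symm
  have h2 : (inner ℝ x y : ℝ) = (x : Fin N → ℝ) ⬝ᵥ (y : Fin N → ℝ) := by
    rw [EuclideanSpace.inner_eq_star_dotProduct, star_trivial, dotProduct_comm]
  have h3 : (inner ℝ (hH.eigenvectorBasis.repr x) (hH.eigenvectorBasis.repr y) : ℝ)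
      = ∑ j, coord hH x j * coord hH y j := by
    rw [EuclideanSpace.inner_eq_star_dotProduct, star_trivial, dotProduct_comm]
    simp [dotProduct, coord_eq_repr]
  rw [← h2, h1, h3]

lemma transpose_eq_self (hH : H.IsHermitian) : Hᵀ = H := hH

lemma vecMul_symm {M : Matrix (Fin N) (Fin N) ℝ} (hM : Mᵀ = M) (v : Fin N → ℝ) :
    v ᵥ* M = M *ᵥ v := by
  rw [← hM, vecMul_transpose, hM]

lemma coord_mulVec (hH : H.IsHermitian) (x : EuclideanSpace ℝ (Fin N)) (j : Fin N) :
    coord hH (WithLp.toLp 2 (H *ᵥ (x : Fin N → ℝ))) j = hH.eigenvalues j * coord hH x j := by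
  unfold coord
  simp only [WithLp.ofLp_toLp]
  rw [dotProduct_mulVec, vecMul_symm (transpose_eq_self hH),
    show H *ᵥ (hH.eigenvectorBasis j : Fin N → ℝ)
      = hH.eigenvalues j • (hH.eigenvectorBasis j : Fin N → ℝ) from hH.mulVec_eigenvectorBasis j,
    smul_dotProduct]
  rfl

lemma quad_expand (hH : H.IsHermitian) (x : EuclideanSpace ℝ (Fin N)) :
    (x : Fin N → ℝ) ⬝ᵥ (H *ᵥ (x : Fin N → ℝ)) = ∑ j, hH.eigenvalues j * (coord hH x j) ^ 2 := by
  have hdc := dot_coord hH x (WithLp.toLp 2 (H *ᵥ (x : Fin N → ℝ)))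
  rw [WithLp.ofLp_toLp] at hdc
  rw [hdc]
  refine Finset.sum_congr rfl fun j _ => ?_
  rw [coord_mulVec hH x j]; ring

lemma normsq_expand (hH : H.IsHermitian) (x : EuclideanSpace ℝ (Fin N)) :
    (x : Fin N → ℝ) ⬝ᵥ (x : Fin N → ℝ) = ∑ j, (coord hH x j) ^ 2 := by
  rw [dot_coord hH x x]
  exact Finset.sum_congr rfl fun j _ => (sq _).symm
noncomputable def spanSet (hH : H.IsHermitian) (s : Finset (Fin N)) :
    Submodule ℝ (EuclideanSpace ℝ (Fin N)) :=
  Submodule.span ℝ (⇑hH.eigenvectorBasis '' ↑s)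

lemma finrank_spanSet (hH : H.IsHermitian) (s : Finset (Fin N)) :
    Module.finrank ℝ (spanSet hH s) = s.card := by
  have hli : LinearIndependent ℝ (fun t : ↥(s : Set (Fin N)) => hH.eigenvectorBasis ↑t) :=
    (hH.eigenvectorBasis.orthonormal.linearIndependent).comp _ Subtype.coe_injective
  have himg : ⇑hH.eigenvectorBasis '' ↑s
      = Set.range (fun t : ↥(s : Set (Fin N)) => hH.eigenvectorBasis ↑t) :=
    Set.image_eq_range _ _
  rw [spanSet, himg, finrank_span_eq_card hli]
  simp
lemma coord_eq_zero_of_mem (hH : H.IsHermitian) {s : Finset (Fin N)}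
    {x : EuclideanSpace ℝ (Fin N)} (hx : x ∈ spanSet hH s) {j : Fin N} (hj : j ∉ s) :
    coord hH x j = 0 := by
  have hx' : x ∈ Submodule.span ℝ (⇑hH.eigenvectorBasis.toBasis '' ↑s) := by
    rwa [hH.eigenvectorBasis.coe_toBasis]
  have hsupp := Module.Basis.repr_support_subset_of_mem_span _ _ hx'
  rw [coord_eq_repr, ← hH.eigenvectorBasis.coe_toBasis_repr_apply]
  by_contra h
  exact hj (hsupp (Finsupp.mem_support_iff.mpr h))
variable {N : ℕ} {H : Matrix (Fin N) (Fin N) ℝ}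

noncomputable def mu (hH : H.IsHermitian) (i : Fin N) : ℝ :=
  hH.eigenvalues (Tuple.sort (fun j => -hH.eigenvalues j) i)

lemma mu_antitone (hH : H.IsHermitian) : Antitone (mu hH) := by
  intro s t hst
  have h := Tuple.monotone_sort (fun j => -hH.eigenvalues j) hst
  simp only [Function.comp_apply] at h
  exact neg_le_neg_iff.mp h

-- the top set: indices with eigenvalue ≥ mu i
noncomputable def topSet (hH : H.IsHermitian) (i : Fin N) : Finset (Fin N) :=
  Finset.image (Tuple.sort (fun j => -hH.eigenvalues j)) (Finset.Iic i)

noncomputable def botSetE (hH : H.IsHermitian) (i : Fin N) : Finset (Fin N) :=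
  Finset.image (Tuple.sort (fun j => -hH.eigenvalues j)) (Finset.Ici i)

lemma card_topSet (hH : H.IsHermitian) (i : Fin N) : (topSet hH i).card = i + 1 := by
  rw [topSet, Finset.card_image_of_injective _ (Equiv.injective _), Fin.card_Iic]

lemma card_botSet (hH : H.IsHermitian) (i : Fin N) : (botSetE hH i).card = N - i := by
  rw [botSetE, Finset.card_image_of_injective _ (Equiv.injective _), Fin.card_Ici]

lemma eigen_ge_of_mem_topSet (hH : H.IsHermitian) {i : Fin N} {j : Fin N}
    (hj : j ∈ topSet hH i) : mu hH i ≤ hH.eigenvalues j := by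
  rw [topSet, Finset.mem_image] at hj
  obtain ⟨t, ht, rfl⟩ := hj
  exact mu_antitone hH (Finset.mem_Iic.mp ht)

lemma eigen_le_of_mem_botSet (hH : H.IsHermitian) {i : Fin N} {j : Fin N}
    (hj : j ∈ botSetE hH i) : hH.eigenvalues j ≤ mu hH i := by
  rw [botSetE, Finset.mem_image] at hj
  obtain ⟨t, ht, rfl⟩ := hj
  exact mu_antitone hH (Finset.mem_Ici.mp ht)
lemma quad_ge_of_mem (hH : H.IsHermitian) {s : Finset (Fin N)} {c : ℝ}
    (hs : ∀ j ∈ s, c ≤ hH.eigenvalues j) {x : EuclideanSpace ℝ (Fin N)}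
    (hx : x ∈ spanSet hH s) :
    c * ((x : Fin N → ℝ) ⬝ᵥ (x : Fin N → ℝ)) ≤ (x : Fin N → ℝ) ⬝ᵥ (H *ᵥ (x : Fin N → ℝ)) := by
  rw [quad_expand hH, normsq_expand hH, Finset.mul_sum]
  refine Finset.sum_le_sum fun j _ => ?_
  by_cases hj : j ∈ s
  · exact mul_le_mul_of_nonneg_right (hs j hj) (sq_nonneg _)
  · rw [coord_eq_zero_of_mem hH hx hj]; simp

lemma quad_le_of_mem (hH : H.IsHermitian) {s : Finset (Fin N)} {c : ℝ}
    (hs : ∀ j ∈ s, hH.eigenvalues j ≤ c) {x : EuclideanSpace ℝ (Fin N)}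
    (hx : x ∈ spanSet hH s) :
    (x : Fin N → ℝ) ⬝ᵥ (H *ᵥ (x : Fin N → ℝ)) ≤ c * ((x : Fin N → ℝ) ⬝ᵥ (x : Fin N → ℝ)) := by
  rw [quad_expand hH, normsq_expand hH, Finset.mul_sum]
  refine Finset.sum_le_sum fun j _ => ?_
  by_cases hj : j ∈ s
  · exact mul_le_mul_of_nonneg_right (hs j hj) (sq_nonneg _)
  · rw [coord_eq_zero_of_mem hH hx hj]; simp

/-- Courant–Fischer, easy direction -/
lemma cf_exists (hH : H.IsHermitian) (i : Fin N) :
    ∃ V : Submodule ℝ (EuclideanSpace ℝ (Fin N)), Module.finrank ℝ V = i + 1 ∧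
      ∀ x ∈ V, mu hH i * ((x : Fin N → ℝ) ⬝ᵥ (x : Fin N → ℝ))
        ≤ (x : Fin N → ℝ) ⬝ᵥ (H *ᵥ (x : Fin N → ℝ)) := by
  refine ⟨spanSet hH (topSet hH i), by rw [finrank_spanSet, card_topSet], fun x hx => ?_⟩
  exact quad_ge_of_mem hH (fun j hj => eigen_ge_of_mem_topSet hH hj) hx

/-- Courant–Fischer, hard direction -/
lemma cf_forall (hH : H.IsHermitian) (i : Fin N)
    (V : Submodule ℝ (EuclideanSpace ℝ (Fin N))) (hV : (i : ℕ) + 1 ≤ Module.finrank ℝ V) :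
    ∃ x ∈ V, x ≠ 0 ∧
      (x : Fin N → ℝ) ⬝ᵥ (H *ᵥ (x : Fin N → ℝ)) ≤ mu hH i * ((x : Fin N → ℝ) ⬝ᵥ (x : Fin N → ℝ)) := by
  set W := spanSet hH (botSetE hH i) with hWdef
  have hW : Module.finrank ℝ W = N - i := by rw [hWdef, finrank_spanSet, card_botSet]
  have hdim : 0 < Module.finrank ℝ ↥(V ⊓ W) := by
    have h1 := Submodule.finrank_sup_add_finrank_inf_eq V W
    have h2 : Module.finrank ℝ ↥(V ⊔ W) ≤ N := by
      have : Module.finrank ℝ ↥(V ⊔ W) ≤ Module.finrank ℝ (EuclideanSpace ℝ (Fin N)) := Submodule.finrank_le (V ⊔ W)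
      rwa [finrank_euclideanSpace_fin] at this
    have hi := i.isLt
    omega
  obtain ⟨x, hx⟩ := Module.finrank_pos_iff_exists_ne_zero.mp hdim
  refine ⟨↑x, (Submodule.mem_inf.mp x.2).1, ?_, ?_⟩
  · simpa using hx
  · exact quad_le_of_mem hH (fun j hj => eigen_le_of_mem_botSet hH hj) (Submodule.mem_inf.mp x.2).2

section helpers
variable {a b : ℕ}

lemma dot_self_nonneg (v : Fin a → ℝ) : 0 ≤ v ⬝ᵥ v :=
  Finset.sum_nonneg fun i _ => mul_self_nonneg _

lemma dot_self_pos {v : Fin a → ℝ} (hv : v ≠ 0) : 0 < v ⬝ᵥ v :=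
  lt_of_le_of_ne (dot_self_nonneg v) fun h => hv (dotProduct_self_eq_zero.mp h.symm)

lemma mulVec_dot (M : Matrix (Fin a) (Fin b) ℝ) (v : Fin b → ℝ) (w : Fin a → ℝ) :
    (M *ᵥ v) ⬝ᵥ w = v ⬝ᵥ (Mᵀ *ᵥ w) := by
  rw [dotProduct_comm, dotProduct_mulVec, dotProduct_comm]
  congr 1
  rw [← transpose_transpose M, vecMul_transpose, transpose_transpose]

lemma proj_contract {Q : Matrix (Fin a) (Fin b) ℝ} (hQ : Qᵀ * Q = 1) (x : Fin a → ℝ) :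
    (Qᵀ *ᵥ x) ⬝ᵥ (Qᵀ *ᵥ x) ≤ x ⬝ᵥ x := by
  set v := Qᵀ *ᵥ x with hv
  set y := Q *ᵥ v with hy
  have hQy : Qᵀ *ᵥ y = v := by rw [hy, mulVec_mulVec, hQ, one_mulVec]
  have hyy : y ⬝ᵥ y = v ⬝ᵥ v := by rw [hy, mulVec_dot, ← hy, hQy]
  have hyz : y ⬝ᵥ (x - y) = 0 := by
    rw [hy, mulVec_dot, ← hy]
    have : Qᵀ *ᵥ (x - y) = 0 := by rw [Matrix.mulVec_sub, hQy, hv, sub_self]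
    rw [this, dotProduct_zero]
  have hzz : 0 ≤ (x - y) ⬝ᵥ (x - y) := dot_self_nonneg _
  have hexp : x ⬝ᵥ x = y ⬝ᵥ y + 2 * (y ⬝ᵥ (x - y)) + (x - y) ⬝ᵥ (x - y) := by
    have hx : x = y + (x - y) := by abel
    calc x ⬝ᵥ x = (y + (x - y)) ⬝ᵥ (y + (x - y)) := by rw [← hx]
      _ = y ⬝ᵥ y + y ⬝ᵥ (x - y) + ((x - y) ⬝ᵥ y + (x - y) ⬝ᵥ (x - y)) := by
          rw [add_dotProduct, dotProduct_add, dotProduct_add]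
      _ = y ⬝ᵥ y + 2 * (y ⬝ᵥ (x - y)) + (x - y) ⬝ᵥ (x - y) := by
          rw [dotProduct_comm (x - y) y]; ring
  linarith [hyy ▸ hexp]

noncomputable def QLin (Q : Matrix (Fin a) (Fin b) ℝ) :
    EuclideanSpace ℝ (Fin b) →ₗ[ℝ] EuclideanSpace ℝ (Fin a) where
  toFun x := WithLp.toLp 2 (Q *ᵥ (x : Fin b → ℝ))
  map_add' x y := by simp [Matrix.mulVec_add]
  map_smul' c x := by simp [Matrix.mulVec_smul]

lemma QLin_apply (Q : Matrix (Fin a) (Fin b) ℝ) (x : EuclideanSpace ℝ (Fin b)) :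
    (QLin Q x : Fin a → ℝ) = Q *ᵥ (x : Fin b → ℝ) := rfl

lemma QLin_inj {Q : Matrix (Fin a) (Fin b) ℝ} (hQ : Qᵀ * Q = 1) :
    Function.Injective (QLin Q) := by
  intro x y h
  have h2 := congrArg (fun z : EuclideanSpace ℝ (Fin a) => Qᵀ *ᵥ (z : Fin a → ℝ)) h
  exact WithLp.ofLp_injective 2 (by simpa [QLin_apply, mulVec_mulVec, hQ, one_mulVec] using h2)

end helpers

lemma mu_mono_of_quad_le {N : ℕ} {B C : Matrix (Fin N) (Fin N) ℝ}
    (hB : B.IsHermitian) (hC : C.IsHermitian)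
    (h : ∀ x : Fin N → ℝ, x ⬝ᵥ (B *ᵥ x) ≤ x ⬝ᵥ (C *ᵥ x)) (i : Fin N) :
    mu hB i ≤ mu hC i := by
  obtain ⟨V, hVr, hVb⟩ := cf_exists hB i
  obtain ⟨x, hxV, hx0, hxc⟩ := cf_forall hC i V (le_of_eq hVr.symm)
  have h1 := hVb x hxV
  have h2 := h x
  have hpos : (0:ℝ) < (x : Fin N → ℝ) ⬝ᵥ (x : Fin N → ℝ) := dot_self_pos (by simpa using hx0)
  exact le_of_mul_le_mul_right (by linarith) hpos

lemma mu_nonneg {N : ℕ} {H : Matrix (Fin N) (Fin N) ℝ} (hH : H.IsHermitian)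
    (hpsd : H.PosSemidef) (i : Fin N) : 0 ≤ mu hH i :=
  hpsd.eigenvalues_nonneg _

lemma mu_eq_zero {N : ℕ} {H : Matrix (Fin N) (Fin N) ℝ} (hH : H.IsHermitian)
    (hpsd : H.PosSemidef) {r : ℕ} (hrank : H.rank ≤ r) (i : Fin N) (hi : r ≤ (i : ℕ)) :
    mu hH i = 0 := by
  refine le_antisymm ?_ (mu_nonneg hH hpsd i)
  by_contra h
  push_neg at h
  have hsub : topSet hH i ⊆ Finset.univ.filter (fun j => hH.eigenvalues j ≠ 0) := by
    intro j hj
    refine Finset.mem_filter.mpr ⟨Finset.mem_univ _, ?_⟩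
    have := eigen_ge_of_mem_topSet hH hj
    intro h0
    rw [h0] at this
    linarith
  have hcard := Finset.card_le_card hsub
  rw [card_topSet] at hcard
  have hrk := hH.rank_eq_card_non_zero_eigs
  rw [Fintype.card_subtype] at hrk
  omega

lemma mu_compress {n k : ℕ} {G : Matrix (Fin n) (Fin n) ℝ} {B : Matrix (Fin k) (Fin k) ℝ}
    {Q : Matrix (Fin n) (Fin k) ℝ}
    (hG : G.IsHermitian) (hB : B.IsHermitian) (hQ : Qᵀ * Q = 1)
    (hBG : B = Qᵀ * G * Q) (hGB : Q * B * Qᵀ = G) (hBpsd : B.PosSemidef)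
    (hkn : k ≤ n) (i : Fin k) : mu hB i = mu hG (Fin.castLE hkn i) := by
  set i' : Fin n := Fin.castLE hkn i with hi'
  have hii' : (i' : ℕ) = (i : ℕ) := rfl
  have hquadG : ∀ v : Fin k → ℝ, (Q *ᵥ v) ⬝ᵥ (G *ᵥ (Q *ᵥ v)) = v ⬝ᵥ (B *ᵥ v) := by
    intro v
    rw [mulVec_dot, mulVec_mulVec, mulVec_mulVec, ← hBG]
  have hnorm : ∀ v : Fin k → ℝ, (Q *ᵥ v) ⬝ᵥ (Q *ᵥ v) = v ⬝ᵥ v := by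
    intro v
    rw [mulVec_dot, mulVec_mulVec, hQ, one_mulVec]
  have hGmul : ∀ x : Fin n → ℝ, G *ᵥ x = Q *ᵥ (B *ᵥ (Qᵀ *ᵥ x)) := by
    intro x
    rw [← hGB, ← Matrix.mulVec_mulVec, ← Matrix.mulVec_mulVec]
  have hquadB : ∀ x : Fin n → ℝ, (Qᵀ *ᵥ x) ⬝ᵥ (B *ᵥ (Qᵀ *ᵥ x)) = x ⬝ᵥ (G *ᵥ x) := by
    intro x
    calc (Qᵀ *ᵥ x) ⬝ᵥ (B *ᵥ (Qᵀ *ᵥ x))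
        = (B *ᵥ (Qᵀ *ᵥ x)) ⬝ᵥ (Qᵀ *ᵥ x) := dotProduct_comm _ _
      _ = (Q *ᵥ (B *ᵥ (Qᵀ *ᵥ x))) ⬝ᵥ x := (mulVec_dot Q _ x).symm
      _ = x ⬝ᵥ (Q *ᵥ (B *ᵥ (Qᵀ *ᵥ x))) := dotProduct_comm _ _
      _ = x ⬝ᵥ (G *ᵥ x) := by rw [← hGmul x]
  refine le_antisymm ?_ ?_
  · -- mu hB i ≤ mu hG i'
    obtain ⟨V, hVr, hVb⟩ := cf_exists hB i
    have hWr : Module.finrank ℝ (V.map (QLin Q)) = (i : ℕ) + 1 := by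
      rw [← hVr]
      exact (Submodule.equivMapOfInjective (QLin Q) (QLin_inj hQ) V).finrank_eq.symm
    obtain ⟨x, hxW, hx0, hxc⟩ := cf_forall hG i' (V.map (QLin Q)) (le_of_eq hWr.symm)
    obtain ⟨v, hvV, hvx⟩ := Submodule.mem_map.mp hxW
    have hv0 : v ≠ 0 := fun hc => hx0 (by rw [← hvx, hc, map_zero])
    have hxfun : (x : Fin n → ℝ) = Q *ᵥ (v : Fin k → ℝ) := by rw [← hvx]; rfl
    have h1 := hVb v hvV
    have h2 : (v : Fin k → ℝ) ⬝ᵥ (B *ᵥ (v : Fin k → ℝ))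
        = (x : Fin n → ℝ) ⬝ᵥ (G *ᵥ (x : Fin n → ℝ)) := by
      rw [hxfun, hquadG]
    have h3 : (x : Fin n → ℝ) ⬝ᵥ (x : Fin n → ℝ) = (v : Fin k → ℝ) ⬝ᵥ (v : Fin k → ℝ) := by
      rw [hxfun, hnorm]
    rw [h3] at hxc
    have hpos : (0:ℝ) < (v : Fin k → ℝ) ⬝ᵥ (v : Fin k → ℝ) := dot_self_pos (by simpa using hv0)
    exact le_of_mul_le_mul_right (by linarith) hpos
  · -- mu hG i' ≤ mu hB i
    by_cases hpos : 0 < mu hG i'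
    · obtain ⟨V, hVr, hVb⟩ := cf_exists hG i'
      set f := (QLin Qᵀ).comp V.subtype with hf
      have hker : ∀ u : ↥V, f u = 0 → u = 0 := by
        intro u hu
        have hu' : Qᵀ *ᵥ ((u : EuclideanSpace ℝ (Fin n)) : Fin n → ℝ) = 0 := congrArg WithLp.ofLp hu
        have hq := hVb ↑u u.2
        have hGu : G *ᵥ ((u : EuclideanSpace ℝ (Fin n)) : Fin n → ℝ) = 0 := by
          rw [hGmul, hu', Matrix.mulVec_zero, Matrix.mulVec_zero]
        rw [hGu, dotProduct_zero] at hq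
        have hnn := dot_self_nonneg ((u : EuclideanSpace ℝ (Fin n)) : Fin n → ℝ)
        have hzz : ((u : EuclideanSpace ℝ (Fin n)) : Fin n → ℝ) ⬝ᵥ _ = 0 := le_antisymm (by nlinarith) hnn
        have := dotProduct_self_eq_zero.mp hzz
        exact Subtype.ext (WithLp.ofLp_injective 2 this)
      have hfinj : Function.Injective f := LinearMap.ker_eq_bot.mp (LinearMap.ker_eq_bot'.mpr hker)
      have hrange : LinearMap.range f = V.map (QLin Qᵀ) := by
        rw [hf, LinearMap.range_comp, Submodule.range_subtype]
      have hWr : Module.finrank ℝ (V.map (QLin Qᵀ)) = (i : ℕ) + 1 := by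
        rw [← hrange, LinearMap.finrank_range_of_inj hfinj, hVr, hii']
      obtain ⟨w, hwW, hw0, hwc⟩ := cf_forall hB i (V.map (QLin Qᵀ)) (le_of_eq hWr.symm)
      obtain ⟨x, hxV, hxw⟩ := Submodule.mem_map.mp hwW
      have hx0 : x ≠ 0 := fun hc => hw0 (by rw [← hxw, hc, map_zero])
      have hwfun : (w : Fin k → ℝ) = Qᵀ *ᵥ (x : Fin n → ℝ) := by rw [← hxw]; rfl
      have h1 := hVb x hxV
      have h2 : (w : Fin k → ℝ) ⬝ᵥ (B *ᵥ (w : Fin k → ℝ))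
          = (x : Fin n → ℝ) ⬝ᵥ (G *ᵥ (x : Fin n → ℝ)) := by
        rw [hwfun, hquadB]
      have h3 : (w : Fin k → ℝ) ⬝ᵥ (w : Fin k → ℝ) ≤ (x : Fin n → ℝ) ⬝ᵥ (x : Fin n → ℝ) := by
        rw [hwfun]; exact proj_contract hQ _
      have hBnn : 0 ≤ mu hB i := mu_nonneg hB hBpsd i
      have hposx : (0:ℝ) < (x : Fin n → ℝ) ⬝ᵥ (x : Fin n → ℝ) := dot_self_pos (by simpa using hx0)
      have h4 : mu hB i * ((w : Fin k → ℝ) ⬝ᵥ (w : Fin k → ℝ))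
          ≤ mu hB i * ((x : Fin n → ℝ) ⬝ᵥ (x : Fin n → ℝ)) :=
        mul_le_mul_of_nonneg_left h3 hBnn
      exact le_of_mul_le_mul_right (by linarith) hposx
    · push_neg at hpos
      exact le_trans hpos (mu_nonneg hB hBpsd i)

lemma gram_quad {a b : ℕ} (M : Matrix (Fin a) (Fin b) ℝ) (x : Fin b → ℝ) :
    x ⬝ᵥ ((Mᵀ * M) *ᵥ x) = (M *ᵥ x) ⬝ᵥ (M *ᵥ x) := by
  rw [← Matrix.mulVec_mulVec, ← mulVec_dot]

lemma psd_tmul {a b : ℕ} (X : Matrix (Fin a) (Fin b) ℝ) : (Xᵀ * X).PosSemidef := by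
  refine Matrix.posSemidef_iff_dotProduct_mulVec.mpr ⟨isHermitian_transpose_mul_self_aux X, fun x => ?_⟩
  have h : star x ⬝ᵥ ((Xᵀ * X) *ᵥ x) = (X *ᵥ x) ⬝ᵥ (X *ᵥ x) := by
    rw [star_trivial, gram_quad]
  rw [h]
  exact dot_self_nonneg _

lemma width_le_of_orth {a b : ℕ} {Q : Matrix (Fin a) (Fin b) ℝ} (hQ : Qᵀ * Q = 1) : b ≤ a := by
  have h1 : (1 : Matrix (Fin b) (Fin b) ℝ).rank = b := by rw [Matrix.rank_one, Fintype.card_fin]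
  have h2 := Matrix.rank_mul_le_right Qᵀ Q
  have h3 := Matrix.rank_le_height Q
  rw [hQ, h1] at h2
  omega

lemma sValSq_eq_mu {m n : ℕ} (A : Matrix (Fin m) (Fin n) ℝ) {i : ℕ} (h : i < n) :
    sValSq A i = mu (isHermitian_transpose_mul_self_aux A) ⟨i, h⟩ := by
  rw [sValSq, dif_pos h]; rfl

theorem stmt_16 {m n k : ℕ} (A : Matrix (Fin m) (Fin n) ℝ)
    (S : Matrix (Fin k) (Fin m) ℝ) (hS : S * Sᵀ = 1)
    (Q : Matrix (Fin n) (Fin k) ℝ) (hQ : Qᵀ * Q = 1)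
    -- `Q` spans the row space of `S * A`
    (hQspan : S * A * Q * Qᵀ = S * A) :
    (S * A * Q) * (S * A * Q)ᵀ = (S * A) * (S * A)ᵀ ∧
    (∀ i : ℕ, sVal (S * A * Q) i = sVal (S * A) i) ∧
    (∀ i : ℕ, sVal (S * A * Q) i ≤ sVal (A * Q) i) ∧
    (∀ r : ℕ, r ≤ k →
      ∑ i ∈ Finset.range r, (sVal (S * A) i) ^ 2 ≤
        ∑ i ∈ Finset.range r, (sVal (A * Q) i) ^ 2) := by
  have hkn : k ≤ n := width_le_of_orth hQ
  have hG : ((S * A)ᵀ * (S * A)).IsHermitian := isHermitian_transpose_mul_self_aux _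
  have hB2 : ((S * A * Q)ᵀ * (S * A * Q)).IsHermitian := isHermitian_transpose_mul_self_aux _
  have hC : ((A * Q)ᵀ * (A * Q)).IsHermitian := isHermitian_transpose_mul_self_aux _
  have hB2psd : ((S * A * Q)ᵀ * (S * A * Q)).PosSemidef := psd_tmul _
  have hGpsd : ((S * A)ᵀ * (S * A)).PosSemidef := psd_tmul _
  have hBG : (S * A * Q)ᵀ * (S * A * Q) = Qᵀ * ((S * A)ᵀ * (S * A)) * Q := by
    rw [Matrix.transpose_mul]
    simp [Matrix.mul_assoc]
  have hGB : Q * ((S * A * Q)ᵀ * (S * A * Q)) * Qᵀ = (S * A)ᵀ * (S * A) := by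
    calc Q * ((S * A * Q)ᵀ * (S * A * Q)) * Qᵀ
        = (S * A * Q * Qᵀ)ᵀ * (S * A * Q * Qᵀ) := by
          simp [Matrix.transpose_mul, Matrix.mul_assoc]
      _ = (S * A)ᵀ * (S * A) := by rw [hQspan]
  have hrankG : ((S * A)ᵀ * (S * A)).rank ≤ k := by
    rw [← hGB, Matrix.mul_assoc]
    exact le_trans (Matrix.rank_mul_le_left _ _) (Matrix.rank_le_width Q)
  have part1 : (S * A * Q) * (S * A * Q)ᵀ = (S * A) * (S * A)ᵀ := by
    rw [Matrix.transpose_mul, ← Matrix.mul_assoc, hQspan]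
  have part2 : ∀ i : ℕ, sVal (S * A * Q) i = sVal (S * A) i := by
    intro i
    rw [sVal, sVal]
    congr 1
    by_cases hik : i < k
    · have hin : i < n := lt_of_lt_of_le hik hkn
      rw [sValSq_eq_mu _ hik, sValSq_eq_mu _ hin]
      exact mu_compress hG hB2 hQ hBG hGB hB2psd hkn ⟨i, hik⟩
    · rw [sValSq, dif_neg hik]
      by_cases hin : i < n
      · rw [sValSq_eq_mu _ hin]
        exact (mu_eq_zero hG hGpsd hrankG ⟨i, hin⟩ (le_of_not_gt hik)).symm
      · rw [sValSq, dif_neg hin]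
  have part3 : ∀ i : ℕ, sVal (S * A * Q) i ≤ sVal (A * Q) i := by
    intro i
    rw [sVal, sVal]
    apply Real.sqrt_le_sqrt
    by_cases hik : i < k
    · rw [sValSq_eq_mu _ hik, sValSq_eq_mu _ hik]
      refine mu_mono_of_quad_le hB2 hC ?_ ⟨i, hik⟩
      intro x
      rw [gram_quad, gram_quad]
      have hy : (S * A * Q) *ᵥ x = S *ᵥ ((A * Q) *ᵥ x) := by
        rw [Matrix.mulVec_mulVec, ← Matrix.mul_assoc]
      rw [hy]
      have hS' : Sᵀᵀ * Sᵀ = 1 := by rw [Matrix.transpose_transpose]; exact hS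
      have h := proj_contract hS' ((A * Q) *ᵥ x)
      rwa [Matrix.transpose_transpose] at h
    · rw [sValSq, dif_neg hik, sValSq, dif_neg hik]
  refine ⟨part1, part2, part3, fun r _ => ?_⟩
  refine Finset.sum_le_sum fun i _ => ?_
  have h1 : sVal (S * A) i ≤ sVal (A * Q) i := by
    rw [← part2 i]; exact part3 i
  exact pow_le_pow_left₀ (Real.sqrt_nonneg _) h1 2
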